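/- Let R be a countable PID which is not a field, with divisibility chain qₙ = ∏_{i<n} sᵢ where (sₙ) enumerates all nonzero elements of R with s₀ = 1. Given any sequence of nonzero elements rₙ ∈ R, there is a choice pₙ ∈ {0, rₙ} such that the element Σ_{n} pₙqₙ of the qₙ-adic completion R̂ of R does not lie in R. -/

import Mathlib

/-- Observation 1.1: given nonzero `rₙ`, one can choose `pₙ ∈ {0, rₙ}` so that the
series `Σ pₙ qₙ` converges in the completion `R̂` to an element not in `R`; concretely,
no element `x ∈ R` is congruent to all the partial sums `Σ_{i<n} pᵢ qᵢ` modulo `qₙ R`. -/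
theorem stmt_2 (R : Type*) [CommRing R] [IsDomain R] [IsPrincipalIdealRing R]
    [Countable R] (hnf : ¬ IsField R) (s q : ℕ → R)
    (hs0 : s 0 = 1) (hsne : ∀ n, s n ≠ 0)
    (hsenum : ∀ x : R, x ≠ 0 → ∃ n, s n = x)
    (hq : ∀ n, q n = ∏ i ∈ Finset.range n, s i)
    (r : ℕ → R) (hr : ∀ n, r n ≠ 0) :
    ∃ p : ℕ → R, (∀ n, p n = 0 ∨ p n = r n) ∧
      ¬ ∃ x : R, ∀ n : ℕ,
        x - (∑ i ∈ Finset.range n, p i * q i) ∈ Ideal.span ({q n} : Set R) := by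
  classical
  obtain ⟨t, ht0, htu⟩ := Ring.exists_not_isUnit_of_not_isField (R := R) hnf
  have hq0 : ∀ n, q n ≠ 0 := by
    intro n
    rw [hq]
    exact Finset.prod_ne_zero_iff.2 fun i _ => hsne i
  have hqdvd : ∀ m n : ℕ, m ≤ n → q m ∣ q n := by
    intro m n h
    rw [hq, hq]
    exact Finset.prod_dvd_prod_of_subset _ _ s (Finset.range_subset_range.2 h)
  -- Key lemma: no nonzero element is divisible by all the `q m`.
  have L1 : ∀ a : R, a ≠ 0 → ∃ m, ¬ q m ∣ a := by
    intro a ha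
    obtain ⟨j, hj⟩ := hsenum (a * t) (mul_ne_zero ha ht0)
    refine ⟨j + 1, fun hdvd => ?_⟩
    obtain ⟨c, hc⟩ := hdvd
    rw [hq, Finset.prod_range_succ, hj] at hc
    apply htu
    have h1 : a * 1 = a * (t * ((∏ i ∈ Finset.range j, s i) * c)) := by
      linear_combination hc
    have h2 := mul_left_cancel₀ ha h1
    exact IsUnit.of_mul_eq_one (a := t) _ h2.symm
  -- Step lemma: we can always extend the construction to exclude one more `x`.
  have STEP : ∀ (N : ℕ) (p : ℕ → R), (∀ i, p i = 0 ∨ p i = r i) →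
      ∀ x : R, ∃ N' : ℕ, ∃ p' : ℕ → R, N < N' ∧ (∀ i, p' i = 0 ∨ p' i = r i) ∧
        (∀ i < N, p' i = p i) ∧
        ¬ q N' ∣ (x - ∑ i ∈ Finset.range N', p' i * q i) := by
    intro N p hp x
    set S : R := ∑ i ∈ Finset.range N, p i * q i with hS
    set p' : ℕ → R := fun i =>
      if i < N then p i else if i = N then (if x = S then r N else 0) else 0 with hp'
    have hp'choice : ∀ i, p' i = 0 ∨ p' i = r i := by
      intro i
      by_cases h1 : i < N
      · simpa [hp', h1] using hp i
      · by_cases h2 : i = N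
        · by_cases h3 : x = S
          · right; simp [hp', h1, h2, h3]
          · left; simp [hp', h1, h2, h3]
        · left; simp [hp', h1, h2]
    have hsum : ∀ N', N < N' → ∑ i ∈ Finset.range N', p' i * q i
        = S + (if x = S then r N * q N else 0) := by
      intro N' hN'
      have hsub : Finset.range (N + 1) ⊆ Finset.range N' := Finset.range_subset_range.2 hN'
      rw [← Finset.sum_subset hsub (by
        intro i _ hi
        simp only [Finset.mem_range, not_lt] at hi
        have h1 : ¬ i < N := by omega
        have h2 : i ≠ N := by omega
        simp [hp', h1, h2])]
      rw [Finset.sum_range_succ]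
      have h1 : ∀ i ∈ Finset.range N, p' i * q i = p i * q i := by
        intro i hi
        simp only [Finset.mem_range] at hi
        simp [hp', hi]
      rw [Finset.sum_congr rfl h1]
      have h2 : ¬ N < N := lt_irrefl N
      by_cases h3 : x = S
      · simp [hp', h2, h3, hS]
      · simp [hp', h2, h3, hS]
    set a : R := x - S - (if x = S then r N * q N else 0) with ha
    have ha0 : a ≠ 0 := by
      by_cases h3 : x = S
      · simp only [ha, h3, if_pos]
        simp only [sub_self, zero_sub, neg_ne_zero]
        exact mul_ne_zero (hr N) (hq0 N)
      · simp only [ha, h3, if_neg, not_false_iff]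
        simpa [sub_ne_zero] using sub_ne_zero.2 h3
    obtain ⟨m, hm⟩ := L1 a ha0
    refine ⟨max m (N + 1), p', by omega, hp'choice, ?_, ?_⟩
    · intro i hi; simp [hp', hi]
    · rw [hsum _ (by omega)]
      intro hdvd
      exact hm ((hqdvd m _ (le_max_left _ _)).trans (by
        convert hdvd using 1; rw [ha]; ring))
  -- enumerate R
  obtain ⟨f, hf⟩ := exists_surjective_nat R
  -- the recursive construction
  have step : ∀ (k : ℕ) (z : {z : ℕ × (ℕ → R) // ∀ i, z.2 i = 0 ∨ z.2 i = r i}),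
      ∃ w : {z : ℕ × (ℕ → R) // ∀ i, z.2 i = 0 ∨ z.2 i = r i},
        z.1.1 < w.1.1 ∧ (∀ i < z.1.1, w.1.2 i = z.1.2 i) ∧
        ¬ q w.1.1 ∣ (f k - ∑ i ∈ Finset.range w.1.1, w.1.2 i * q i) := by
    intro k z
    obtain ⟨N', p', h1, h2, h3, h4⟩ := STEP z.1.1 z.1.2 z.2 (f k)
    exact ⟨⟨(N', p'), h2⟩, h1, h3, h4⟩
  set st : ℕ → {z : ℕ × (ℕ → R) // ∀ i, z.2 i = 0 ∨ z.2 i = r i} :=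
    fun k => Nat.rec ⟨(0, fun _ => 0), fun _ => Or.inl rfl⟩
      (fun k z => Classical.choose (step k z)) k with hstdef
  have hst : ∀ k, st (k + 1) = Classical.choose (step k (st k)) := fun k => rfl
  have hmono : ∀ k, (st k).1.1 < (st (k + 1)).1.1 := by
    intro k; rw [hst k]; exact (Classical.choose_spec (step k (st k))).1
  have hNk : ∀ k, k ≤ (st k).1.1 := by
    intro k
    induction k with
    | zero => exact Nat.zero_le _
    | succ k ih => exact lt_of_le_of_lt ih (hmono k)
  have hNle : ∀ k j, k ≤ j → (st k).1.1 ≤ (st j).1.1 := by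
    intro k j h
    induction j, h using Nat.le_induction with
    | base => exact le_rfl
    | succ j hj ih => exact le_trans ih (le_of_lt (hmono j))
  have hagree : ∀ k j, k ≤ j → ∀ i, i < (st k).1.1 → (st j).1.2 i = (st k).1.2 i := by
    intro k j h
    induction j, h using Nat.le_induction with
    | base => intro i _; rfl
    | succ j hj ih =>
      intro i hi
      rw [← ih i hi, hst j]
      exact (Classical.choose_spec (step j (st j))).2.1 i
        (lt_of_lt_of_le hi (hNle k j hj))
  refine ⟨fun i => (st (i + 1)).1.2 i, fun i => (st (i + 1)).2 i, ?_⟩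
  rintro ⟨x, hx⟩
  obtain ⟨k, hk⟩ := hf x
  have key := (Classical.choose_spec (step k (st k))).2.2
  rw [← hst k] at key
  apply key
  have hag : ∀ i, i < (st (k + 1)).1.1 → (st (i + 1)).1.2 i = (st (k + 1)).1.2 i := by
    intro i hi
    rcases le_total (i + 1) (k + 1) with h | h
    · exact (hagree (i + 1) (k + 1) h i (lt_of_lt_of_le (Nat.lt_succ_self i) (hNk (i + 1)))).symm
    · exact hagree (k + 1) (i + 1) h i hi
  have hsum : ∑ i ∈ Finset.range (st (k + 1)).1.1, (st (i + 1)).1.2 i * q i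
      = ∑ i ∈ Finset.range (st (k + 1)).1.1, (st (k + 1)).1.2 i * q i := by
    refine Finset.sum_congr rfl fun i hi => ?_
    rw [hag i (Finset.mem_range.1 hi)]
  rw [hk, ← hsum]
  have hx' := hx (st (k + 1)).1.1
  rwa [Ideal.mem_span_singleton] at hx'
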